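/- Let V be the splitting PVF on M(R) and let x0 in R. Then the curve mu(t) = (1/2) delta_{x0 + t} + (1/2) delta_{x0 - t} is a solution of the MDE dmu/dt = V[mu] with initial datum mu(0) = delta_{x0}; explicitly, for every f in C_c^infinity(R) and every t > 0, d/dt of the integral of f d mu(t) = (1/2) f'(x0 + t) - (1/2) f'(x0 - t), which equals the integral of grad f(x) . v dV[mu(t)](x,v). -/

import Mathlib

open MeasureTheory Set Metric Filter ENNReal RealInnerProductSpace

noncomputable section

/-- Euclidean space `ℝ^n`. -/
abbrev Euc (n : ℕ) := EuclideanSpace ℝ (Fin n)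

/-- `τ` is a transference plan between `μ` and `ν`. -/
def IsPlan {X Y : Type*} [MeasurableSpace X] [MeasurableSpace Y]
    (τ : Measure (X × Y)) (μ : Measure X) (ν : Measure Y) : Prop :=
  τ.map Prod.fst = μ ∧ τ.map Prod.snd = ν

/-- Optimal transport cost with a general cost function. -/
def WassCost {X Y : Type*} [MeasurableSpace X] [MeasurableSpace Y]
    (c : X → Y → ℝ≥0∞) (μ : Measure X) (ν : Measure Y) : ℝ≥0∞ :=
  sInf { r | ∃ τ : Measure (X × Y), IsPlan τ μ ν ∧ r = ∫⁻ p, c p.1 p.2 ∂τ }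

/-- The Wasserstein distance `W(μ,ν)`. -/
def Wass {X : Type*} [MeasurableSpace X] [PseudoEMetricSpace X]
    (μ ν : Measure X) : ℝ≥0∞ :=
  WassCost (fun x y => edist x y) μ ν

/-- The generalized Wasserstein distance `W^g(μ,ν)`. -/
def GWass {X : Type*} [MeasurableSpace X] [PseudoEMetricSpace X]
    (μ ν : Measure X) : ℝ≥0∞ :=
  sInf { r | ∃ μ' ν' : Measure X, μ' ≤ μ ∧ ν' ≤ ν ∧ μ' univ = ν' univ ∧
    r = (μ univ - μ' univ) + (ν univ - ν' univ) + Wass μ' ν' }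

/-- `τ` is an optimal transference plan between `μ` and `ν`. -/
def IsOptPlan {X : Type*} [MeasurableSpace X] [PseudoEMetricSpace X]
    (τ : Measure (X × X)) (μ ν : Measure X) : Prop :=
  IsPlan τ μ ν ∧ ∫⁻ p, edist p.1 p.2 ∂τ = Wass μ ν

/-- `(μ',ν')` attains the infimum in the definition of `W^g(μ,ν)`. -/
def IsGWassMinimizer {X : Type*} [MeasurableSpace X] [PseudoEMetricSpace X]
    (μ ν μ' ν' : Measure X) : Prop :=
  μ' ≤ μ ∧ ν' ≤ ν ∧ μ' univ = ν' univ ∧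
  (μ univ - μ' univ) + (ν univ - ν' univ) + Wass μ' ν' = GWass μ ν

/-- The operator `𝒲^g` on measures on the tangent bundle `X × X`. -/
def WcalG {X : Type*} [MeasurableSpace X] [PseudoEMetricSpace X]
    (V₁ V₂ : Measure (X × X)) : ℝ≥0∞ :=
  sInf { r | ∃ (W₁ W₂ : Measure (X × X)) (T : Measure ((X × X) × (X × X))),
    W₁ ≤ V₁ ∧ W₂ ≤ V₂ ∧ IsPlan T W₁ W₂ ∧
    IsGWassMinimizer (V₁.map Prod.fst) (V₂.map Prod.fst)
      (W₁.map Prod.fst) (W₂.map Prod.fst) ∧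
    IsOptPlan (T.map (fun p => (p.1.1, p.2.1))) (W₁.map Prod.fst) (W₂.map Prod.fst) ∧
    r = ∫⁻ p, edist p.1.2 p.2.2 ∂T }

/-- `μ` is concentrated on the set `s` (i.e. `supp μ ⊆ s` for closed `s`). -/
def ConcOn {X : Type*} [MeasurableSpace X] (μ : Measure X) (s : Set X) : Prop :=
  μ sᶜ = 0

/-- `μ` belongs to `M(X)`: positive measure with finite mass and compact support. -/
def MemM {X : Type*} [MeasurableSpace X] [NormedAddCommGroup X] (μ : Measure X) : Prop :=
  μ univ ≠ ∞ ∧ ∃ R : ℝ, ConcOn μ (closedBall 0 R)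

/-- `V` is a probability vector field: `π₁ # V[μ] = μ`. -/
def IsPVF {X : Type*} [MeasurableSpace X] (V : Measure X → Measure (X × X)) : Prop :=
  ∀ μ : Measure X, (V μ).map Prod.fst = μ

/-- (H:bound): support sublinearity of the PVF `V` with constant `C`. -/
def HBound {X : Type*} [MeasurableSpace X] [NormedAddCommGroup X]
    (V : Measure X → Measure (X × X)) (C : ℝ) : Prop :=
  0 < C ∧ ∀ (μ : Measure X) (R : ℝ), 0 ≤ R → ConcOn μ (closedBall 0 R) →
    ConcOn (V μ) {p : X × X | ‖p.2‖ ≤ C * (1 + R)}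

/-- (OM:Lip-g): local Lipschitz continuity of the ODE vector field `g`. -/
def OMLipg (m n : ℕ) (g : Euc m → Measure (Euc n) → Euc m) : Prop :=
  ∀ R : ℝ, 0 < R → ∃ L : ℝ, 0 < L ∧
    ∀ (x y : Euc m) (μ ν : Measure (Euc n)), ‖x‖ ≤ R → ‖y‖ ≤ R →
      MemM μ → MemM ν → ConcOn μ (closedBall 0 R) → ConcOn ν (closedBall 0 R) →
      ENNReal.ofReal ‖g x μ - g y ν‖ ≤
        ENNReal.ofReal L * (ENNReal.ofReal ‖x - y‖ + GWass μ ν)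

/-- (OM:Lip-V): local Lipschitz continuity of the PVF `V` w.r.t. `𝒲^g` and `W^g`. -/
def OMLipV (n : ℕ) (V : Measure (Euc n) → Measure (Euc n × Euc n)) : Prop :=
  ∀ R : ℝ, 0 < R → ∃ K : ℝ, 0 < K ∧
    ∀ μ ν : Measure (Euc n), MemM μ → MemM ν →
      ConcOn μ (closedBall 0 R) → ConcOn ν (closedBall 0 R) →
      WcalG (V μ) (V ν) ≤ ENNReal.ofReal K * GWass μ ν

/-- (OM:bound-s): uniform bound on support and mass of the source `s`. -/
def OMBoundS (m n : ℕ) (src : Measure (Euc n) → Euc m → Measure (Euc n)) : Prop :=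
  ∃ Rbar : ℝ, 0 < Rbar ∧ ∀ (μ : Measure (Euc n)) (x : Euc m),
    ConcOn (src μ x) (closedBall 0 Rbar) ∧ (src μ x) univ ≤ ENNReal.ofReal Rbar

/-- (OM:Lip-s): Lipschitz continuity of the source `s`. -/
def OMLipS (m n : ℕ) (src : Measure (Euc n) → Euc m → Measure (Euc n)) : Prop :=
  ∃ M : ℝ, 0 < M ∧ ∀ (x y : Euc m) (μ ν : Measure (Euc n)), MemM μ → MemM ν →
    GWass (src μ x) (src ν y) ≤
      ENNReal.ofReal M * (ENNReal.ofReal ‖x - y‖ + GWass μ ν)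

/-- A solution of the coupled ODE-MDE system `ẋ = g(x,μ)`, `μ̇ = V[μ] + s[μ,x]`
on `[0,T]` with initial datum `(x₀,μ₀)` (weak formulation in integral form). -/
def IsSolODEMDE (m n : ℕ) (T : ℝ)
    (g : Euc m → Measure (Euc n) → Euc m)
    (V : Measure (Euc n) → Measure (Euc n × Euc n))
    (src : Measure (Euc n) → Euc m → Measure (Euc n))
    (x0 : Euc m) (μ0 : Measure (Euc n))
    (x : ℝ → Euc m) (μ : ℝ → Measure (Euc n)) : Prop :=
  (∀ t ∈ Icc 0 T, x t = x0 + ∫ τ in (0:ℝ)..t, g (x τ) (μ τ)) ∧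
  μ 0 = μ0 ∧
  (∃ C : ℝ≥0∞, C ≠ ∞ ∧ ∀ t ∈ Icc 0 T, μ t univ ≤ C) ∧
  (∀ f : Euc n → ℝ, ContDiff ℝ (⊤ : ℕ∞) f → HasCompactSupport f →
    ∀ t ∈ Icc 0 T,
      ∫ y, f y ∂(μ t) = (∫ y, f y ∂μ0) +
        ∫ s in (0:ℝ)..t,
          ((∫ p : Euc n × Euc n, ⟪gradient f p.1, p.2⟫ ∂(V (μ s))) +
           (∫ y, f y ∂(src (μ s) (x s)))))

/-- A Lipschitz semigroup for the coupled ODE-MDE system, with components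
`S¹ : [0,T] × ℝ^m × M(ℝ^n) → ℝ^m` and `S² : [0,T] × ℝ^m × M(ℝ^n) → M(ℝ^n)`. -/
def IsLipSemigroup (m n : ℕ) (T : ℝ)
    (g : Euc m → Measure (Euc n) → Euc m)
    (V : Measure (Euc n) → Measure (Euc n × Euc n))
    (src : Measure (Euc n) → Euc m → Measure (Euc n))
    (S1 : ℝ → Euc m → Measure (Euc n) → Euc m)
    (S2 : ℝ → Euc m → Measure (Euc n) → Measure (Euc n)) : Prop :=
  (∀ (x : Euc m) (μ : Measure (Euc n)), MemM μ → S1 0 x μ = x ∧ S2 0 x μ = μ) ∧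
  (∀ s t : ℝ, 0 ≤ s → 0 ≤ t → s + t ≤ T →
    ∀ (x : Euc m) (μ : Measure (Euc n)), MemM μ →
      S1 t (S1 s x μ) (S2 s x μ) = S1 (t + s) x μ ∧
      S2 t (S1 s x μ) (S2 s x μ) = S2 (t + s) x μ) ∧
  (∀ (x : Euc m) (μ : Measure (Euc n)), MemM μ →
    IsSolODEMDE m n T g V src x μ (fun t => S1 t x μ) (fun t => S2 t x μ)) ∧
  (∀ R M : ℝ, 0 < R → 0 < M → ∃ C : ℝ, 0 < C ∧
    ∀ (x y : Euc m) (μ ν : Measure (Euc n)), MemM μ → MemM ν →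
      ‖x‖ ≤ M → ‖y‖ ≤ M →
      ConcOn μ (closedBall 0 R) → ConcOn ν (closedBall 0 R) →
      μ univ + ν univ ≤ ENNReal.ofReal M →
      ∀ s ∈ Icc (0:ℝ) T, ∀ t ∈ Icc (0:ℝ) T,
        ‖S1 t x μ‖ ≤ C ∧
        ConcOn (S2 t x μ) (closedBall 0 (Real.exp (C * t) * (R + M + 1))) ∧
        ENNReal.ofReal ‖S1 t x μ - S1 t y ν‖ + GWass (S2 t x μ) (S2 t y ν) ≤
          ENNReal.ofReal (Real.exp (C * t)) * (ENNReal.ofReal ‖x - y‖ + GWass μ ν) ∧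
        ENNReal.ofReal ‖S1 t x μ - S1 s x μ‖ + GWass (S2 t x μ) (S2 s x μ) ≤
          ENNReal.ofReal (C * |t - s|))

/-! ### One-dimensional constructions -/

/-- The barycenter `B(μ) = sup {x : μ((-∞,x]) ≤ |μ|/2}` of `μ ∈ M(ℝ)`. -/
def bar (μ : Measure ℝ) : ℝ :=
  sSup {x : ℝ | μ (Iic x) ≤ μ univ / 2}

/-- The splitting PVF `V[μ] = μ ⊗ ν_x`: mass strictly left of the barycenter moves
with velocity `-1`, mass strictly to the right with velocity `+1`, and the mass at
the barycenter is split according to the coefficients `η` and `|μ|/2 - μ((-∞,B))`. -/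
def splitPVF (μ : Measure ℝ) : Measure (ℝ × ℝ) :=
  ((μ.restrict (Iio (bar μ))).map (fun x => (x, (-1 : ℝ)))) +
  ((μ.restrict (Ioi (bar μ))).map (fun x => (x, (1 : ℝ)))) +
  (μ (Iic (bar μ)) - μ univ / 2) • Measure.dirac (bar μ, (1 : ℝ)) +
  (μ univ / 2 - μ (Iio (bar μ))) • Measure.dirac (bar μ, (-1 : ℝ))

/-- Index set for the 1D spatial grid `ℤ/N² ∩ [-N,N]`. -/
def XIdx1 (N : ℕ) : Type := {i : ℤ // |i| ≤ (N : ℤ) ^ 3}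

/-- Index set for the 1D velocity grid `ℤ/N ∩ [-N,N]`. -/
def VIdx1 (N : ℕ) : Type := {j : ℤ // |j| ≤ (N : ℤ) ^ 2}

instance (N : ℕ) : Countable (XIdx1 N) := by unfold XIdx1; infer_instance
instance (N : ℕ) : Countable (VIdx1 N) := by unfold VIdx1; infer_instance

/-- The 1D spatial grid point `x_i = i/N²`. -/
def gridX1 (N : ℕ) (i : XIdx1 N) : ℝ := (i.1 : ℝ) / (N : ℝ) ^ 2

/-- The 1D velocity grid point `v_j = j/N`. -/
def gridV1 (N : ℕ) (j : VIdx1 N) : ℝ := (j.1 : ℝ) / (N : ℝ)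

/-- The 1D spatial discretization operator `𝒜^x_N`. -/
def AxN1 (N : ℕ) (μ : Measure ℝ) : Measure ℝ :=
  Measure.sum (fun i : XIdx1 N =>
    μ (Ico (gridX1 N i) (gridX1 N i + 1 / (N : ℝ) ^ 2)) • Measure.dirac (gridX1 N i))

/-- The 1D mass `m^v_{ij}(W) = W({(x_i, v) : v ∈ v_j + Q'})`. -/
def mv1 (N : ℕ) (W : Measure (ℝ × ℝ)) (i : XIdx1 N) (j : VIdx1 N) : ℝ≥0∞ :=
  W {p | p.1 = gridX1 N i ∧ p.2 ∈ Ico (gridV1 N j) (gridV1 N j + 1 / (N : ℝ))}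

/-- The 1D lattice approximate solution (LAS) for the MDE `μ̇ = V[μ]` at the
discrete times `ℓ Δ_N`. -/
def LAS1 (V : Measure ℝ → Measure (ℝ × ℝ)) (N : ℕ) (μ0 : Measure ℝ) :
    ℕ → Measure ℝ
  | 0 => AxN1 N μ0
  | l + 1 =>
    Measure.sum (fun ij : XIdx1 N × VIdx1 N =>
      mv1 N (V (LAS1 V N μ0 l)) ij.1 ij.2 •
        Measure.dirac (gridX1 N ij.1 + (1 / (N : ℝ)) * gridV1 N ij.2))

/-- The 1D lattice approximate solution interpolated at time `t`. -/
def LAS1t (V : Measure ℝ → Measure (ℝ × ℝ)) (N : ℕ) (μ0 : Measure ℝ) (t : ℝ) :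
    Measure ℝ :=
  let l : ℕ := ⌊t * (N : ℝ)⌋₊
  let τ : ℝ := t - (l : ℝ) / (N : ℝ)
  Measure.sum (fun ij : XIdx1 N × VIdx1 N =>
    mv1 N (V (LAS1 V N μ0 l)) ij.1 ij.2 •
      Measure.dirac (gridX1 N ij.1 + τ * gridV1 N ij.2))

lemma my_integrable_dirac {α E : Type*} [MeasurableSpace α] [MeasurableSingletonClass α]
    [NormedAddCommGroup E] (f : α → E) (a : α) : Integrable f (Measure.dirac a) := by
  refine (integrable_const (f a)).congr ?_
  rw [MeasureTheory.ae_dirac_eq]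
  exact Filter.eventually_pure.2 rfl

lemma half_ne_top : (1/2 : ℝ≥0∞) ≠ ∞ := by simp

lemma integral_two_diracs {α : Type*} [MeasurableSpace α] [MeasurableSingletonClass α]
    (f : α → ℝ) (a b : α) :
    ∫ y, f y ∂((1/2 : ℝ≥0∞) • Measure.dirac a + (1/2 : ℝ≥0∞) • Measure.dirac b)
      = (1/2) * f a + (1/2) * f b := by
  rw [integral_add_measure ((my_integrable_dirac f a).smul_measure half_ne_top)
    ((my_integrable_dirac f b).smul_measure half_ne_top),
    integral_smul_measure, integral_smul_measure, integral_dirac, integral_dirac]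
  norm_num

lemma two_diracs_apply (s : Set ℝ) (a b : ℝ) :
    ((1/2 : ℝ≥0∞) • Measure.dirac a + (1/2 : ℝ≥0∞) • Measure.dirac b) s
      = (1/2 : ℝ≥0∞) * (s.indicator 1 a) + (1/2 : ℝ≥0∞) * (s.indicator 1 b) := by
  simp [Measure.dirac_apply]

lemma two_diracs_univ (a b : ℝ) :
    ((1/2 : ℝ≥0∞) • Measure.dirac a + (1/2 : ℝ≥0∞) • Measure.dirac b) univ = 1 := by
  rw [two_diracs_apply]
  simp only [indicator_of_mem (mem_univ _), Pi.one_apply, mul_one]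
  exact ENNReal.add_halves 1

lemma bar_two_diracs (x0 t : ℝ) (ht : 0 < t) :
    bar ((1/2 : ℝ≥0∞) • Measure.dirac (x0 + t) + (1/2 : ℝ≥0∞) • Measure.dirac (x0 - t))
      = x0 + t := by
  unfold bar
  rw [two_diracs_univ]
  have hset : {x : ℝ | ((1/2 : ℝ≥0∞) • Measure.dirac (x0 + t)
      + (1/2 : ℝ≥0∞) • Measure.dirac (x0 - t)) (Iic x) ≤ 1 / 2} = Iio (x0 + t) := by
    ext x
    rw [mem_setOf_eq, two_diracs_apply, mem_Iio]
    constructor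
    · intro h
      by_contra hx
      push_neg at hx
      have h1 : x0 + t ∈ Iic x := hx
      have h2 : x0 - t ∈ Iic x := by simp only [mem_Iic]; linarith
      rw [indicator_of_mem h1, indicator_of_mem h2] at h
      simp only [Pi.one_apply, mul_one, ENNReal.add_halves] at h
      exact absurd h (by simp)
    · intro hx
      have h1 : x0 + t ∉ Iic x := by simp only [mem_Iic]; push_neg; linarith
      rw [indicator_of_notMem h1, mul_zero, zero_add]
      calc (1/2 : ℝ≥0∞) * (Iic x).indicator 1 (x0 - t) ≤ (1/2) * 1 := by
            gcongr
            by_cases h : (x0 - t) ∈ Iic x <;> simp [h]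
        _ = 1/2 := mul_one _
  rw [hset]
  exact csSup_Iio

lemma splitPVF_two_diracs (x0 t : ℝ) (ht : 0 < t) :
    splitPVF ((1/2 : ℝ≥0∞) • Measure.dirac (x0 + t) + (1/2 : ℝ≥0∞) • Measure.dirac (x0 - t))
      = (1/2 : ℝ≥0∞) • Measure.dirac ((x0 - t, -1) : ℝ × ℝ)
        + (1/2 : ℝ≥0∞) • Measure.dirac ((x0 + t, 1) : ℝ × ℝ) := by
  classical
  set μt : Measure ℝ := (1/2 : ℝ≥0∞) • Measure.dirac (x0 + t)
      + (1/2 : ℝ≥0∞) • Measure.dirac (x0 - t) with hμ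
  have hlt : x0 - t < x0 + t := by linarith
  unfold splitPVF
  rw [bar_two_diracs x0 t ht, two_diracs_univ]
  have r1 : (Measure.dirac (x0 + t)).restrict (Iio (x0 + t)) = 0 := by
    rw [MeasureTheory.restrict_dirac' measurableSet_Iio, if_neg (by simp)]
  have r2 : (Measure.dirac (x0 - t)).restrict (Iio (x0 + t)) = Measure.dirac (x0 - t) := by
    rw [MeasureTheory.restrict_dirac' measurableSet_Iio, if_pos (mem_Iio.mpr hlt)]
  have r3 : (Measure.dirac (x0 + t)).restrict (Ioi (x0 + t)) = 0 := by
    rw [MeasureTheory.restrict_dirac' measurableSet_Ioi, if_neg (by simp)]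
  have r4 : (Measure.dirac (x0 - t)).restrict (Ioi (x0 + t)) = 0 := by
    rw [MeasureTheory.restrict_dirac' measurableSet_Ioi, if_neg (by simp [not_lt, le_of_lt hlt])]
  have hres1 : μt.restrict (Iio (x0 + t)) = (1/2 : ℝ≥0∞) • Measure.dirac (x0 - t) := by
    rw [hμ, Measure.restrict_add, Measure.restrict_smul, Measure.restrict_smul, r1, r2,
      smul_zero, zero_add]
  have hres2 : μt.restrict (Ioi (x0 + t)) = 0 := by
    rw [hμ, Measure.restrict_add, Measure.restrict_smul, Measure.restrict_smul, r3, r4]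
    simp
  have hmeas1 : Measurable (fun x : ℝ => (x, (-1 : ℝ))) := measurable_id.prodMk measurable_const
  have hmeas2 : Measurable (fun x : ℝ => (x, (1 : ℝ))) := measurable_id.prodMk measurable_const
  have hIic : μt (Iic (x0 + t)) = 1 := by
    rw [hμ, two_diracs_apply, indicator_of_mem (by simp : (x0+t) ∈ Iic (x0+t)),
      indicator_of_mem (by simp [le_of_lt hlt] : (x0-t) ∈ Iic (x0+t))]
    simp only [Pi.one_apply, mul_one]
    exact ENNReal.add_halves 1
  have hIio : μt (Iio (x0 + t)) = 1/2 := by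
    rw [hμ, two_diracs_apply, indicator_of_notMem (by simp : (x0+t) ∉ Iio (x0+t)),
      indicator_of_mem (mem_Iio.mpr hlt)]
    simp
  rw [hres1, hres2, hIic, hIio, Measure.map_smul, Measure.map_dirac' hmeas1,
    Measure.map_zero, ENNReal.sub_half one_ne_top, tsub_self, zero_smul, add_zero, add_zero]

/-- **Proposition (the symmetric pair of travelling Dirac masses solves the MDE for
the splitting PVF with initial datum `δ_{x₀}`).** -/
theorem splitPVF_dirac_solution (x0 : ℝ) :
    let μ : ℝ → Measure ℝ := fun t =>
      (1 / 2 : ℝ≥0∞) • Measure.dirac (x0 + t) + (1 / 2 : ℝ≥0∞) • Measure.dirac (x0 - t)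
    μ 0 = Measure.dirac x0 ∧
    (∀ t : ℝ, (μ t) univ = 1) ∧
    (∀ f : ℝ → ℝ, ContDiff ℝ (⊤ : ℕ∞) f → HasCompactSupport f →
      ∀ t : ℝ, 0 < t →
        HasDerivAt (fun s : ℝ => ∫ y, f y ∂(μ s))
          ((1 / 2) * deriv f (x0 + t) - (1 / 2) * deriv f (x0 - t)) t ∧
        (1 / 2) * deriv f (x0 + t) - (1 / 2) * deriv f (x0 - t) =
          ∫ p : ℝ × ℝ, deriv f p.1 * p.2 ∂(splitPVF (μ t))) := by
  intro μ
  refine ⟨?_, fun t => two_diracs_univ _ _, ?_⟩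
  · show (1/2 : ℝ≥0∞) • Measure.dirac (x0 + 0) + (1/2 : ℝ≥0∞) • Measure.dirac (x0 - 0)
      = Measure.dirac x0
    rw [add_zero, sub_zero, ← add_smul, ENNReal.add_halves, one_smul]
  · intro f hf hfc t ht
    have hdf : Differentiable ℝ f := hf.differentiable (by simp)
    constructor
    · have hfun : (fun s : ℝ => ∫ y, f y ∂(μ s))
          = fun s : ℝ => (1/2) * f (x0 + s) + (1/2) * f (x0 - s) :=
        funext fun s => integral_two_diracs f _ _
      rw [hfun]
      have h1 : HasDerivAt (fun s : ℝ => f (x0 + s)) (deriv f (x0 + t)) t := by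
        have := ((hdf (x0 + t)).hasDerivAt).comp t ((hasDerivAt_id t).const_add x0)
        simpa [Function.comp_def] using this
      have h2 : HasDerivAt (fun s : ℝ => f (x0 - s)) (-(deriv f (x0 - t))) t := by
        have := ((hdf (x0 - t)).hasDerivAt).comp t ((hasDerivAt_id t).const_sub x0)
        simpa [mul_comm, Function.comp_def] using this
      have := (h1.const_mul (1/2 : ℝ)).add (h2.const_mul (1/2 : ℝ))
      convert this using 1
      · rfl
      · rfl
      · rfl
      · ring
    · rw [splitPVF_two_diracs x0 t ht, integral_two_diracs (fun p : ℝ × ℝ => deriv f p.1 * p.2)]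
      ring
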